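/- Softmax block recurrence: under the assumptions of the previous block-recurrence theorem with φ = exp, define additionally L(n) = 0 for n < 0 and L(n) = L(n−1) + Δ_{(:,n)} 1_{(n)} for n ≥ 0 (so L(n) ∈ ℝ^S holds shortcode counts), A = exp(Q K̂ᵀ + B), and for each block n let (A V)_{(n,:)} and (A 1)_{(n)} be computed via the block recurrences (A V)_{(n,:)} = exp(Q_{(n,:)} Cᵀ) U(n−2) + exp(Q_{(n,:)} K̂_{(n−1,:)}ᵀ + B_{(n,n−1)}) V_{(n−1,:)} + exp(Q_{(n,:)} K̂_{(n,:)}ᵀ + B_{(n,n)}) V_{(n,:)}, and similarly for (A 1)_{(n)} with V replaced by the ones vector. Then Diag((A 1)_{(n)})^{-1} (A V)_{(n,:)} equals the n-th row-block of Softmax(Q K̂ᵀ + B) · V. -/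

import Mathlib

/-!
For a query `i` in block `n`, split the keys `t` into four ranges: the future, block `n`,
block `n - 1`, and everything at least two blocks back. Causality kills the future. Two or more
blocks back the bias vanishes and `K̂ t = C (z t)`, so there `A i t` depends on `t` only through
its code `z t`; grouping those keys by code turns their contribution into
`∑ s, exp (q_i ⬝ C s) * U (n - 2) s`, because unrolling the recurrence shows that `U (n - 2) s`
(resp. `Lc (n - 2) s`) sums `V t` (resp. `1`) over the keys with code `s` that lie two or more
blocks back. Hence numerator and denominator are exactly `∑ t, A i t * V t` and `∑ t, A i t`.
-/

/-- Extended-real exponential with the convention `exp(−∞) = 0`. -/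
noncomputable def eexp (x : EReal) : ℝ := if x = ⊥ then 0 else Real.exp x.toReal

theorem eexp_add_bot (x : EReal) : eexp (x + ⊥) = 0 := by
  simp [eexp]

theorem Finset.sum_mul_sum_ite_and_eq {ι κ R : Type*} [Fintype ι] [Fintype κ] [DecidableEq κ]
    [NonUnitalNonAssocSemiring R] (p : ι → Prop) [DecidablePred p] (z : ι → κ) (f : κ → R)
    (w : ι → R) :
    ∑ s, f s * ∑ t, (if p t ∧ z t = s then w t else 0) =
      ∑ t, if p t then f (z t) * w t else 0 := by
  simp_rw [Finset.mul_sum, mul_ite, mul_zero]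
  rw [Finset.sum_comm]
  refine Finset.sum_congr rfl fun t _ => ?_
  by_cases hp : p t <;> simp [hp]

section BlockCache

variable {κ M : Type*} [DecidableEq κ] [AddCommMonoid M] {T L : ℕ}

/-- The recurrence defining the paper's caches: `U` (with `W = V`) and `L` (with `W = 1`). -/
def IsBlockCache (L : ℕ) (z : Fin T → κ) (W : Fin T → M) (G : ℤ → κ → M) : Prop :=
  (∀ m : ℤ, m < 0 → ∀ s, G m s = 0) ∧
    ∀ (m : ℕ) s, G m s = G ((m : ℤ) - 1) s +
      ∑ t : Fin T, if m * L ≤ t.val ∧ t.val < (m + 1) * L ∧ z t = s then W t else 0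

theorem IsBlockCache.apply_sub_one {z : Fin T → κ} {W : Fin T → M} {G : ℤ → κ → M}
    (hG : IsBlockCache L z W G) (m : ℕ) (s : κ) :
    G ((m : ℤ) - 1) s = ∑ t : Fin T, if t.val < m * L ∧ z t = s then W t else 0 := by
  induction m with
  | zero => simp [hG.1 (-1) (by norm_num)]
  | succ m ih =>
    rw [Nat.cast_succ, add_sub_cancel_right, hG.2, ih, ← Finset.sum_add_distrib]
    refine Finset.sum_congr rfl fun t _ => ?_
    have hmono : m * L ≤ (m + 1) * L := by gcongr; omega
    by_cases hz : z t = s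
    · simp only [hz, and_true]
      split_ifs <;> first | (exfalso; omega) | simp
    · simp [hz]

theorem IsBlockCache.apply_sub_two {z : Fin T → κ} {W : Fin T → M} {G : ℤ → κ → M}
    (hG : IsBlockCache L z W G) (n : ℕ) (s : κ) :
    G ((n : ℤ) - 2) s = ∑ t : Fin T, if t.val + L < n * L ∧ z t = s then W t else 0 := by
  cases n with
  | zero => simp [hG.1 (-2) (by norm_num)]
  | succ k =>
    rw [show ((k + 1 : ℕ) : ℤ) - 2 = (k : ℤ) - 1 by push_cast; ring,
      hG.apply_sub_one]
    simp only [add_one_mul, add_lt_add_iff_right]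

end BlockCache

theorem Fin.sum_eq_sum_before_prev_block_add_prev_block_add_block {M : Type*} [AddCommMonoid M]
    {T : ℕ} (n L : ℕ) (a : Fin T → M) (hfuture : ∀ t : Fin T, (n + 1) * L ≤ t.val → a t = 0) :
    ∑ t, a t = (∑ t : Fin T, if t.val + L < n * L then a t else 0)
      + (∑ t : Fin T, if n * L ≤ t.val + L ∧ t.val + L < (n + 1) * L then a t else 0)
      + (∑ t : Fin T, if n * L ≤ t.val ∧ t.val < (n + 1) * L then a t else 0) := by
  rw [← Finset.sum_add_distrib, ← Finset.sum_add_distrib]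
  refine Finset.sum_congr rfl fun t _ => ?_
  have hsucc : (n + 1) * L = n * L + L := add_one_mul n L
  split_ifs <;> first | (exfalso; omega) | exact (hfuture t (by omega)).trans (by simp) | simp

theorem blockRecurrence_eq_sum {κ R : Type*} [Fintype κ] [DecidableEq κ]
    [NonUnitalNonAssocSemiring R] {T L : ℕ} (n : ℕ) (z : Fin T → κ) (e : κ → R)
    (a : Fin T → R) (hbefore : ∀ t : Fin T, t.val + L < n * L → a t = e (z t))
    (hfuture : ∀ t : Fin T, (n + 1) * L ≤ t.val → a t = 0) (W : Fin T → R) (G : ℤ → κ → R)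
    (hG : IsBlockCache L z W G) :
    (∑ s, e s * G ((n : ℤ) - 2) s)
        + (∑ t : Fin T, if n * L ≤ t.val + L ∧ t.val + L < (n + 1) * L then a t * W t else 0)
        + (∑ t : Fin T, if n * L ≤ t.val ∧ t.val < (n + 1) * L then a t * W t else 0)
      = ∑ t, a t * W t := by
  rw [Fin.sum_eq_sum_before_prev_block_add_prev_block_add_block n L (fun t => a t * W t)
    fun t ht => by rw [hfuture t ht, zero_mul]]
  simp_rw [hG.apply_sub_two n, Finset.sum_mul_sum_ite_and_eq]
  congr 2
  refine Finset.sum_congr rfl fun t _ => ?_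
  split_ifs with ht
  · rw [hbefore t ht]
  · rfl

theorem vq_softmax_block_recurrence_general {S T N L D Dv : ℕ}
    (Q : Fin T → Fin D → ℝ) (C : Fin S → Fin D → ℝ) (z : Fin T → Fin S)
    (Khat : Fin T → Fin D → ℝ) (hK : ∀ j : Fin T, Khat j = C (z j))
    (V : Fin T → Fin Dv → ℝ)
    (B : Fin T → Fin T → EReal)
    (hBcausal : ∀ i j : Fin T, i.val < j.val → B i j = ⊥)
    (hBzero : ∀ i j : Fin T, j.val + L < i.val → B i j = 0)
    (A : Fin T → Fin T → ℝ)
    (hA : ∀ i t : Fin T,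
      A i t = eexp (((∑ d, Q i d * Khat t d : ℝ) : EReal) + B i t))
    (U : ℤ → Fin S → Fin Dv → ℝ)
    (hUneg : ∀ n : ℤ, n < 0 → U n = 0)
    (hUrec : ∀ n : ℕ, U n = fun s d => U ((n : ℤ) - 1) s d +
      ∑ t : Fin T, if n * L ≤ t.val ∧ t.val < (n + 1) * L ∧ z t = s then V t d else 0)
    (Lc : ℤ → Fin S → ℝ)
    (hLneg : ∀ n : ℤ, n < 0 → Lc n = 0)
    (hLrec : ∀ n : ℕ, Lc n = fun s => Lc ((n : ℤ) - 1) s +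
      ∑ t : Fin T, if n * L ≤ t.val ∧ t.val < (n + 1) * L ∧ z t = s then (1 : ℝ) else 0) :
    ∀ n : ℕ, n < N → ∀ i : Fin T, n * L ≤ i.val → i.val < (n + 1) * L → ∀ d : Fin Dv,
      ((∑ s : Fin S, eexp ((∑ dd, Q i dd * C s dd : ℝ) : EReal) * U ((n : ℤ) - 2) s d)
          + (∑ t : Fin T,
              if n * L ≤ t.val + L ∧ t.val + L < (n + 1) * L then A i t * V t d else 0)
          + (∑ t : Fin T,
              if n * L ≤ t.val ∧ t.val < (n + 1) * L then A i t * V t d else 0))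
        / ((∑ s : Fin S, eexp ((∑ dd, Q i dd * C s dd : ℝ) : EReal) * Lc ((n : ℤ) - 2) s)
          + (∑ t : Fin T,
              if n * L ≤ t.val + L ∧ t.val + L < (n + 1) * L then A i t else 0)
          + (∑ t : Fin T,
              if n * L ≤ t.val ∧ t.val < (n + 1) * L then A i t else 0))
      = ∑ t : Fin T, (A i t / ∑ t' : Fin T, A i t') * V t d := by
  intro n _ i hi₁ hi₂ d
  have hbefore : ∀ t : Fin T, t.val + L < n * L →
      A i t = eexp ((∑ dd, Q i dd * C (z t) dd : ℝ) : EReal) := fun t ht => by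
    rw [hA, hBzero i t (by omega), add_zero, hK]
  have hfuture : ∀ t : Fin T, (n + 1) * L ≤ t.val → A i t = 0 := fun t ht => by
    rw [hA, hBcausal i t (by omega), eexp_add_bot]
  have key := blockRecurrence_eq_sum n z
    (fun s => eexp ((∑ dd, Q i dd * C s dd : ℝ) : EReal)) (A i) hbefore hfuture
  have hnum := key (V · d) (U · · d)
    ⟨fun m hm s => congrFun (congrFun (hUneg m hm) s) d,
      fun m s => congrFun (congrFun (hUrec m) s) d⟩
  have hden := key 1 Lc ⟨fun m hm s => congrFun (hLneg m hm) s, fun m s => congrFun (hLrec m) s⟩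
  simp only [Pi.one_apply, mul_one] at hden
  rw [hnum, hden, Finset.sum_div]
  simp_rw [div_mul_eq_mul_div]

/-- softmax block recurrence. With `φ = exp` (and `exp(−∞) = 0`), the
cache variables `U(n)` (grouped value sums) and `Lc(n)` (shortcode counts) let one
compute the numerators `(A V)` and denominators `(A 1)` blockwise; normalizing yields
exactly the corresponding row-block of `Softmax(Q K̂ᵀ + B) · V`. -/
theorem vq_softmax_block_recurrence {S T N L D Dv : ℕ} (hL : 0 < L) (hT : T = N * L)
    (Q : Fin T → Fin D → ℝ) (C : Fin S → Fin D → ℝ) (z : Fin T → Fin S)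
    (Khat : Fin T → Fin D → ℝ) (hK : ∀ j : Fin T, Khat j = C (z j))
    (V : Fin T → Fin Dv → ℝ)
    (B : Fin T → Fin T → EReal)
    (hBcausal : ∀ i j : Fin T, i.val < j.val → B i j = ⊥)
    (hBzero : ∀ i j : Fin T, j.val + L < i.val → B i j = 0)
    (hBtop : ∀ i j : Fin T, B i j ≠ ⊤)
    (hBfin : ∀ i : Fin T, ∃ j : Fin T, B i j ≠ ⊥)
    (A : Fin T → Fin T → ℝ)
    (hA : ∀ i t : Fin T,
      A i t = eexp (((∑ d, Q i d * Khat t d : ℝ) : EReal) + B i t))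
    (U : ℤ → Fin S → Fin Dv → ℝ)
    (hUneg : ∀ n : ℤ, n < 0 → U n = 0)
    (hUrec : ∀ n : ℕ, U n = fun s d => U ((n : ℤ) - 1) s d +
      ∑ t : Fin T, if n * L ≤ t.val ∧ t.val < (n + 1) * L ∧ z t = s then V t d else 0)
    (Lc : ℤ → Fin S → ℝ)
    (hLneg : ∀ n : ℤ, n < 0 → Lc n = 0)
    (hLrec : ∀ n : ℕ, Lc n = fun s => Lc ((n : ℤ) - 1) s +
      ∑ t : Fin T, if n * L ≤ t.val ∧ t.val < (n + 1) * L ∧ z t = s then (1 : ℝ) else 0) :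
    ∀ n : ℕ, n < N → ∀ i : Fin T, n * L ≤ i.val → i.val < (n + 1) * L → ∀ d : Fin Dv,
      ((∑ s : Fin S, eexp ((∑ dd, Q i dd * C s dd : ℝ) : EReal) * U ((n : ℤ) - 2) s d)
          + (∑ t : Fin T,
              if n * L ≤ t.val + L ∧ t.val + L < (n + 1) * L then A i t * V t d else 0)
          + (∑ t : Fin T,
              if n * L ≤ t.val ∧ t.val < (n + 1) * L then A i t * V t d else 0))
        / ((∑ s : Fin S, eexp ((∑ dd, Q i dd * C s dd : ℝ) : EReal) * Lc ((n : ℤ) - 2) s)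
          + (∑ t : Fin T,
              if n * L ≤ t.val + L ∧ t.val + L < (n + 1) * L then A i t else 0)
          + (∑ t : Fin T,
              if n * L ≤ t.val ∧ t.val < (n + 1) * L then A i t else 0))
      = ∑ t : Fin T, (A i t / ∑ t' : Fin T, A i t') * V t d :=
  vq_softmax_block_recurrence_general Q C z Khat hK V B hBcausal hBzero A hA U hUneg hUrec Lc hLneg
    hLrec
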